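/- Let n ≥ 2, 0 < s < 1, 0 < p < ∞ with sp < n, and let q satisfy np/(n−sp) ≤ q < ∞. If u ∈ Ẇ^{s,p}_q(ℝ^n), then u is constant almost everywhere: there is K ∈ ℝ with u(x) = K for a.e. x ∈ ℝ^n. -/

import Mathlib

open MeasureTheory Filter Set
open scoped ENNReal NNReal

noncomputable section

/-- Axis-parallel half-open cube with lower-left corner `a` and edge length `l`. -/
def cube (n : ℕ) (a : EuclideanSpace ℝ (Fin n)) (l : ℝ) : Set (EuclideanSpace ℝ (Fin n)) :=
  {x | ∀ i, a i ≤ x i ∧ x i < a i + l}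

/-- The median of `u` over a set `A`. -/
def median (n : ℕ) (u : EuclideanSpace ℝ (Fin n) → ℝ)
    (A : Set (EuclideanSpace ℝ (Fin n))) : ℝ :=
  sSup {M : ℝ | volume A / 2 ≤ volume {x ∈ A | u x < M}}

/-- The precise representative: `limsup` of medians over cubes containing `x`,
as the edge length tends to `0` from the right. -/
def preciseRep (n : ℕ) (u : EuclideanSpace ℝ (Fin n) → ℝ)
    (x : EuclideanSpace ℝ (Fin n)) : ℝ :=
  Filter.limsup (fun al : EuclideanSpace ℝ (Fin n) × ℝ => median n u (cube n al.1 al.2))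
    ((Filter.comap Prod.snd (nhdsWithin 0 (Set.Ioi 0))) ⊓
      Filter.principal {al : EuclideanSpace ℝ (Fin n) × ℝ | x ∈ cube n al.1 al.2})

/-- The `p`-th power of the homogeneous `W^{s,p}_q` seminorm. -/
def fracEnergy (n : ℕ) (s p q : ℝ) (u : EuclideanSpace ℝ (Fin n) → ℝ) : ℝ≥0∞ :=
  ∫⁻ x, (∫⁻ y, ENNReal.ofReal (|u x - u y| ^ q / ‖x - y‖ ^ ((n : ℝ) + s * q))) ^ (p / q)

/-- Membership in the homogeneous fractional Sobolev space `Ẇ^{s,p}_q(ℝⁿ)`. -/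
def MemHomFrac (n : ℕ) (s p q : ℝ) (u : EuclideanSpace ℝ (Fin n) → ℝ) : Prop :=
  Measurable u ∧ fracEnergy n s p q u < ⊤

/-- The `W^{s,p}_q` norm: `L^p` norm plus the seminorm. -/
def fracNorm (n : ℕ) (s p q : ℝ) (u : EuclideanSpace ℝ (Fin n) → ℝ) : ℝ≥0∞ :=
  eLpNorm u (ENNReal.ofReal p) volume + (fracEnergy n s p q u) ^ (1 / p)

/-- The `lam`-dimensional Hausdorff content. -/
def hContent (n : ℕ) (lam : ℝ) (A : Set (EuclideanSpace ℝ (Fin n))) : ℝ≥0∞ :=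
  ⨅ (B : ℕ → Set (EuclideanSpace ℝ (Fin n))) (_ : A ⊆ ⋃ j, B j),
    ∑' j, EMetric.diam (B j) ^ lam

/-- A set `E ⊂ ℝⁿ` is `(p,s)`-thin at infinity. -/
def ThinAtInfinity (n : ℕ) (p s : ℝ) (E : Set (EuclideanSpace ℝ (Fin n))) : Prop :=
  ∀ lam : ℝ, (n : ℝ) - s * p < lam →
    Filter.Tendsto (fun m : ℕ => hContent n lam (E \ Metric.ball 0 (m : ℝ)))
      Filter.atTop (nhds 0)

lemma exists_ab_of_not_ae_const {X : Type*} [MeasurableSpace X] (μ : Measure X)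
    (hμ : μ Set.univ ≠ 0) (u : X → ℝ) (h : ¬ ∃ K : ℝ, ∀ᵐ x ∂μ, u x = K) :
    ∃ a b : ℝ, a < b ∧ 0 < μ {x | u x ≤ a} ∧ 0 < μ {x | b ≤ u x} := by
  by_contra hcon
  push_neg at hcon
  -- hcon : ∀ a b, a < b → 0 < μ {u ≤ a} → μ {b ≤ u} ≤ 0
  have H : ∀ a b : ℝ, a < b → 0 < μ {x | u x ≤ a} → μ {x | b ≤ u x} = 0 := by
    intro a b hab ha
    exact le_antisymm (hcon a b hab ha) (zero_le)
  -- the set of levels with positive sublevel measure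
  set P : Set ℝ := {r : ℝ | 0 < μ {x | u x ≤ r}} with hP
  have hPne : P.Nonempty := by
    by_contra hPe
    rw [Set.not_nonempty_iff_eq_empty] at hPe
    have h0 : ∀ r : ℚ, μ {x | u x ≤ (r : ℝ)} = 0 := by
      intro r
      by_contra hr
      have : (r : ℝ) ∈ P := pos_iff_ne_zero.2 hr
      simp [hPe] at this
    have hae : ∀ᵐ x ∂μ, ∀ r : ℚ, ¬ (u x ≤ (r : ℝ)) := by
      rw [MeasureTheory.ae_all_iff]
      intro r
      rw [MeasureTheory.ae_iff]
      simpa using h0 r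
    have : ∀ᵐ (_ : X) ∂μ, False := by
      filter_upwards [hae] with x hx
      obtain ⟨r, hr⟩ := exists_rat_gt (u x)
      exact hx r hr.le
    rw [MeasureTheory.ae_iff] at this
    simp at this
    exact hμ (by simp [this])
  have hQne : ∃ r' : ℝ, 0 < μ {x | r' ≤ u x} := by
    by_contra hQe
    push_neg at hQe
    have h0 : ∀ r : ℚ, μ {x | (r : ℝ) ≤ u x} = 0 := by
      intro r
      exact le_antisymm (hQe r) (zero_le)
    have hae : ∀ᵐ x ∂μ, ∀ r : ℚ, ¬ ((r : ℝ) ≤ u x) := by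
      rw [MeasureTheory.ae_all_iff]
      intro r
      rw [MeasureTheory.ae_iff]
      simpa using h0 r
    have : ∀ᵐ (_ : X) ∂μ, False := by
      filter_upwards [hae] with x hx
      obtain ⟨r, hr⟩ := exists_rat_lt (u x)
      exact hx r hr.le
    rw [MeasureTheory.ae_iff] at this
    simp at this
    exact hμ (by simp [this])
  obtain ⟨r', hr'⟩ := hQne
  have hPbdd : BddBelow P := by
    refine ⟨r', fun a ha => ?_⟩
    by_contra hlt
    push_neg at hlt
    have := H a r' hlt ha
    rw [this] at hr'
    exact lt_irrefl _ hr'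
  set K := sInf P with hK
  apply h
  refine ⟨K, ?_⟩
  have h1 : ∀ᵐ x ∂μ, ∀ a : ℚ, (a : ℝ) < K → ¬ (u x ≤ (a : ℝ)) := by
    rw [MeasureTheory.ae_all_iff]
    intro a
    by_cases ha : (a : ℝ) < K
    · have hnotP : (a : ℝ) ∉ P := fun hmem => absurd (csInf_le hPbdd hmem) (not_le.2 ha)
      have h0 : μ {x | u x ≤ (a : ℝ)} = 0 := by
        by_contra h0
        exact hnotP (pos_iff_ne_zero.2 h0)
      rw [MeasureTheory.ae_iff]
      convert h0 using 2
      ext x; simp [ha]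
    · rw [MeasureTheory.ae_iff]
      convert measure_empty (μ := μ) using 2
      ext x; simp [ha]
  have h2 : ∀ᵐ x ∂μ, ∀ b : ℚ, K < (b : ℝ) → ¬ ((b : ℝ) ≤ u x) := by
    rw [MeasureTheory.ae_all_iff]
    intro b
    by_cases hb : K < (b : ℝ)
    · obtain ⟨a, haP, hab⟩ := exists_lt_of_csInf_lt hPne hb
      have h0 : μ {x | (b : ℝ) ≤ u x} = 0 := H a b hab haP
      rw [MeasureTheory.ae_iff]
      convert h0 using 2
      ext x; simp [hb]
    · rw [MeasureTheory.ae_iff]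
      convert measure_empty (μ := μ) using 2
      ext x; simp [hb]
  filter_upwards [h1, h2] with x hx1 hx2
  by_contra hne
  rcases lt_or_gt_of_ne hne with hlt | hgt
  · obtain ⟨a, ha1, ha2⟩ := exists_rat_btwn hlt
    exact hx1 a ha2 ha1.le
  · obtain ⟨b, hb1, hb2⟩ := exists_rat_btwn hgt
    exact hx2 b hb1 hb2.le

lemma nontrivial_euclidean (n : ℕ) (hn : 1 ≤ n) : Nontrivial (EuclideanSpace ℝ (Fin n)) := by
  haveI : NeZero n := ⟨by omega⟩
  infer_instance

/-- Divergence of `∫ ‖x‖^{-α}` outside a ball, when `α ≤ n`. -/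
lemma lintegral_rpow_neg_norm_eq_top (n : ℕ) (hn : 1 ≤ n) (α R : ℝ) (hα : α ≤ n)
    (hα0 : 0 ≤ α) (hR : 1 ≤ R) :
    ∫⁻ x in {x : EuclideanSpace ℝ (Fin n) | R ≤ ‖x‖},
      ENNReal.ofReal (‖x‖ ^ (-α)) = ∞ := by
  haveI := nontrivial_euclidean n hn
  have hR0 : (0:ℝ) < R := lt_of_lt_of_le one_pos hR
  set A : ℕ → Set (EuclideanSpace ℝ (Fin n)) :=
    fun k => Metric.ball 0 (2 ^ (k+1) * R) \ Metric.ball 0 (2 ^ k * R) with hA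
  have hmemA : ∀ k x, x ∈ A k ↔ ‖x‖ < 2 ^ (k+1) * R ∧ 2 ^ k * R ≤ ‖x‖ := by
    intro k x
    simp [hA, mem_ball_zero_iff, not_lt]
  have hAm : ∀ k, MeasurableSet (A k) :=
    fun k => measurableSet_ball.diff measurableSet_ball
  have hdisj0 : ∀ k l : ℕ, k < l → Disjoint (A k) (A l) := by
    intro k l hlt
    rw [Set.disjoint_left]
    intro x hxk hxl
    rw [hmemA] at hxk hxl
    have h1 : (2:ℝ) ^ (k+1) ≤ 2 ^ l := by
      apply pow_le_pow_right₀ one_le_two; omega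
    have := hxk.1
    have := hxl.2
    nlinarith
  have hdisj : Pairwise (Function.onFun Disjoint A) := by
    intro k l hkl
    rcases lt_or_gt_of_ne hkl with h | h
    · exact hdisj0 k l h
    · exact (hdisj0 l k h).symm
  have hsub : (⋃ k, A k) ⊆ {x | R ≤ ‖x‖} := by
    intro x hx
    obtain ⟨k, hk⟩ := Set.mem_iUnion.1 hx
    rw [hmemA] at hk
    have h1 : (1:ℝ) ≤ 2 ^ k := one_le_pow₀ one_le_two
    have := hk.2
    simp only [Set.mem_setOf_eq]
    nlinarith
  have key : (∑' k, ∫⁻ x in A k, ENNReal.ofReal (‖x‖ ^ (-α))) ≤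
      ∫⁻ x in {x : EuclideanSpace ℝ (Fin n) | R ≤ ‖x‖}, ENNReal.ofReal (‖x‖ ^ (-α)) := by
    rw [← lintegral_iUnion hAm hdisj]
    exact lintegral_mono_set hsub
  rw [eq_top_iff]
  refine le_trans ?_ key
  -- lower bound each piece by a fixed positive constant
  set c0 : ℝ≥0∞ := ENNReal.ofReal (1 - (1/2) ^ n) * volume (Metric.ball (0 : EuclideanSpace ℝ (Fin n)) 1) with hc0
  have hhalf : (0:ℝ) < 1 - (1/2) ^ n := by
    have : (1/2 : ℝ) ^ n < 1 := pow_lt_one₀ (by norm_num) (by norm_num) (by omega)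
    linarith
  have hc0ne : c0 ≠ 0 := by
    rw [hc0]
    apply mul_ne_zero
    · simpa using hhalf
    · exact (Metric.measure_ball_pos volume _ one_pos).ne'
  have hterm : ∀ k : ℕ, c0 ≤ ∫⁻ x in A k, ENNReal.ofReal (‖x‖ ^ (-α)) := by
    intro k
    set t : ℝ := 2 ^ (k+1) * R with ht
    have htpos : (0:ℝ) < t := by positivity
    have ht1 : (1:ℝ) ≤ t := by
      have : (1:ℝ) ≤ 2 ^ (k+1) := one_le_pow₀ one_le_two
      nlinarith
    have hhk : (2:ℝ) ^ k * R = t / 2 := by rw [ht]; ring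
    -- pointwise bound on A k
    have hpt : ∀ x ∈ A k, ENNReal.ofReal (t ^ (-α)) ≤ ENNReal.ofReal (‖x‖ ^ (-α)) := by
      intro x hx
      rw [hmemA] at hx
      apply ENNReal.ofReal_le_ofReal
      apply Real.rpow_le_rpow_of_nonpos
      · have h1 : (1:ℝ) ≤ 2 ^ k := one_le_pow₀ one_le_two
        nlinarith [hx.2]
      · exact hx.1.le
      · linarith
    have hlow : ENNReal.ofReal (t ^ (-α)) * volume (A k) ≤
        ∫⁻ x in A k, ENNReal.ofReal (‖x‖ ^ (-α)) := by
      rw [← setLIntegral_const (A k) (ENNReal.ofReal (t ^ (-α)))]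
      exact setLIntegral_mono' (hAm k) hpt
    refine le_trans ?_ hlow
    -- compute volume of the annulus
    have hb : ∀ r : ℝ, 0 < r → volume (Metric.ball (0 : EuclideanSpace ℝ (Fin n)) r) =
        ENNReal.ofReal (r ^ n) * volume (Metric.ball (0 : EuclideanSpace ℝ (Fin n)) 1) := by
      intro r hr
      rw [Measure.addHaar_ball volume 0 hr.le, finrank_euclideanSpace_fin]
    have hvol : volume (A k) = ENNReal.ofReal (t ^ n - (t/2) ^ n) *
        volume (Metric.ball (0 : EuclideanSpace ℝ (Fin n)) 1) := by
      rw [hA]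
      simp only
      rw [measure_diff (Metric.ball_subset_ball (by nlinarith [one_le_pow₀ (one_le_two (α := ℝ)) (n := k)]))
        measurableSet_ball.nullMeasurableSet measure_ball_lt_top.ne]
      rw [hb _ (by positivity : (0:ℝ) < 2 ^ (k+1) * R), hb _ (by positivity : (0:ℝ) < 2 ^ k * R)]
      rw [hhk, ← ht]
      rw [← ENNReal.sub_mul (fun _ _ => measure_ball_lt_top.ne), ← ENNReal.ofReal_sub]
      positivity
    rw [hvol, ← mul_assoc, ← ENNReal.ofReal_mul (by positivity), hc0]
    apply mul_le_mul_left
    apply ENNReal.ofReal_le_ofReal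
    have hsplit : t ^ (-α) * (t ^ n - (t/2) ^ n) = t ^ ((n:ℝ) - α) * (1 - (1/2)^n) := by
      have h1 : (t/2 : ℝ) ^ n = t ^ n * (1/2) ^ n := by rw [div_pow, one_div_pow, mul_one_div]
      have h2 : t ^ (-α) * (t:ℝ) ^ (n:ℕ) = t ^ ((n:ℝ) - α) := by
        rw [← Real.rpow_natCast t n, ← Real.rpow_add htpos]
        ring_nf
      rw [h1]
      calc t ^ (-α) * (t ^ n - t ^ n * (1/2) ^ n)
          = (t ^ (-α) * (t:ℝ) ^ (n:ℕ)) * (1 - (1/2)^n) := by ring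
        _ = t ^ ((n:ℝ) - α) * (1 - (1/2)^n) := by rw [h2]
    rw [hsplit]
    have : (1:ℝ) ≤ t ^ ((n:ℝ) - α) := Real.one_le_rpow ht1 (by linarith)
    nlinarith
  calc (⊤ : ℝ≥0∞) = ∑' _ : ℕ, c0 := (ENNReal.tsum_const_eq_top_of_ne_zero hc0ne).symm
    _ ≤ ∑' k, ∫⁻ x in A k, ENNReal.ofReal (‖x‖ ^ (-α)) := ENNReal.tsum_le_tsum hterm

lemma exists_ball_inter_pos {X : Type*} [MeasurableSpace X] [PseudoMetricSpace X]
    (μ : Measure X) (S : Set X) (x0 : X) (hS : 0 < μ S) :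
    ∃ k : ℕ, 0 < μ (S ∩ Metric.ball x0 (k : ℝ)) := by
  by_contra h
  push_neg at h
  have h0 : ∀ k : ℕ, μ (S ∩ Metric.ball x0 (k : ℝ)) = 0 :=
    fun k => le_antisymm (h k) (zero_le)
  have hcover : S ⊆ ⋃ k : ℕ, S ∩ Metric.ball x0 (k : ℝ) := by
    intro x hx
    obtain ⟨k, hk⟩ := exists_nat_gt (dist x x0)
    exact Set.mem_iUnion.2 ⟨k, hx, by simpa [Metric.mem_ball] using hk⟩
  have : μ S = 0 :=
    le_antisymm (le_trans (measure_mono hcover) (le_of_eq (measure_iUnion_null h0))) (zero_le)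
  exact hS.ne' this

theorem stmt3 (n : ℕ) (hn : 2 ≤ n) (s p q : ℝ) (hs0 : 0 < s) (hs1 : s < 1)
    (hp : 0 < p) (hspn : s * p < n) (hq : (n : ℝ) * p / ((n : ℝ) - s * p) ≤ q)
    (u : EuclideanSpace ℝ (Fin n) → ℝ) (hu : MemHomFrac n s p q u) :
    ∃ K : ℝ, ∀ᵐ x : EuclideanSpace ℝ (Fin n) ∂volume, u x = K := by
  by_contra hcon
  obtain ⟨hmeas, hfin⟩ := hu
  have hn1 : 1 ≤ n := by omega
  haveI := nontrivial_euclidean n hn1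
  have hnR : (0:ℝ) < n := by exact_mod_cast (by omega : 0 < n)
  have hnsp : (0:ℝ) < (n : ℝ) - s * p := by linarith
  have hq0 : 0 < q := lt_of_lt_of_le (div_pos (by positivity) hnsp) hq
  have huniv : volume (Set.univ : Set (EuclideanSpace ℝ (Fin n))) ≠ 0 := by
    intro h
    exact (Metric.measure_ball_pos volume (0 : EuclideanSpace ℝ (Fin n)) one_pos).ne'
      (le_antisymm (h ▸ measure_mono (Set.subset_univ _)) (zero_le))
  obtain ⟨a, b, hab, hA, hB⟩ := exists_ab_of_not_ae_const volume huniv u hcon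
  obtain ⟨kA, hkA⟩ := exists_ball_inter_pos volume {x | u x ≤ a} 0 hA
  obtain ⟨kB, hkB⟩ := exists_ball_inter_pos volume {x | b ≤ u x} 0 hB
  set R : ℝ := max (max kA kB) 1 with hRdef
  have hR1 : (1:ℝ) ≤ R := le_max_right _ _
  have hR0 : (0:ℝ) < R := lt_of_lt_of_le one_pos hR1
  set SA : Set (EuclideanSpace ℝ (Fin n)) := {x | u x ≤ a} ∩ Metric.ball 0 R with hSAdef
  set SB : Set (EuclideanSpace ℝ (Fin n)) := {x | b ≤ u x} ∩ Metric.ball 0 R with hSBdef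
  have hSAm : MeasurableSet SA := (hmeas measurableSet_Iic).inter measurableSet_ball
  have hSBm : MeasurableSet SB :=
    (hmeas measurableSet_Ici).inter measurableSet_ball
  have hSApos : 0 < volume SA := by
    refine lt_of_lt_of_le hkA (measure_mono (Set.inter_subset_inter_right _ ?_))
    exact Metric.ball_subset_ball (le_trans (le_max_left _ _) (le_max_left _ _))
  have hSBpos : 0 < volume SB := by
    refine lt_of_lt_of_le hkB (measure_mono (Set.inter_subset_inter_right _ ?_))
    exact Metric.ball_subset_ball (le_trans (le_max_right _ _) (le_max_left _ _))
  set m : ℝ≥0∞ := min (volume SA) (volume SB) with hmdef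
  have hm0 : 0 < m := lt_min hSApos hSBpos
  have hmtop : m ≠ ⊤ :=
    (lt_of_le_of_lt (le_trans (min_le_left _ _)
      (measure_mono (Set.inter_subset_right))) measure_ball_lt_top).ne
  set δ : ℝ := (b - a) / 2 with hδdef
  have hδ : 0 < δ := by rw [hδdef]; linarith
  set e : ℝ := (n : ℝ) + s * q with hedef
  have he0 : 0 < e := by rw [hedef]; positivity
  set α : ℝ := e * (p / q) with hαdef
  have hα0 : 0 < α := by rw [hαdef]; positivity
  have hαn : α ≤ n := by
    have hnpq : (n : ℝ) * p ≤ q * ((n : ℝ) - s * p) := (div_le_iff₀ hnsp).1 hq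
    rw [hαdef, hedef, ← mul_div_assoc, div_le_iff₀ hq0]
    nlinarith
  -- pointwise lower bound on the inner integral for far-away x
  have claim1 : ∀ x : EuclideanSpace ℝ (Fin n), R ≤ ‖x‖ →
      m * ENNReal.ofReal (δ ^ q / (2 * ‖x‖) ^ e) ≤
        ∫⁻ y, ENNReal.ofReal (|u x - u y| ^ q / ‖x - y‖ ^ e) := by
    intro x hx
    have hx0 : (0:ℝ) < ‖x‖ := lt_of_lt_of_le hR0 hx
    have main : ∀ C : Set (EuclideanSpace ℝ (Fin n)), MeasurableSet C →
        C ⊆ Metric.ball 0 R → m ≤ volume C → (∀ y ∈ C, δ ≤ |u x - u y|) →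
        m * ENNReal.ofReal (δ ^ q / (2 * ‖x‖) ^ e) ≤
          ∫⁻ y, ENNReal.ofReal (|u x - u y| ^ q / ‖x - y‖ ^ e) := by
      intro C hCm hCb hCv hCd
      have h1 : ∀ y ∈ C, ENNReal.ofReal (δ ^ q / (2 * ‖x‖) ^ e) ≤
          ENNReal.ofReal (|u x - u y| ^ q / ‖x - y‖ ^ e) := by
        intro y hy
        have hyR : ‖y‖ < R := by simpa [mem_ball_zero_iff] using hCb hy
        have hxy0 : (0:ℝ) < ‖x - y‖ := by
          rw [norm_sub_pos_iff]
          rintro rfl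
          exact absurd hx (not_le.2 hyR)
        apply ENNReal.ofReal_le_ofReal
        refine div_le_div₀ (Real.rpow_nonneg (abs_nonneg _) q)
          (Real.rpow_le_rpow hδ.le (hCd y hy) hq0.le)
          (Real.rpow_pos_of_pos hxy0 e)
          (Real.rpow_le_rpow (norm_nonneg _) ?_ he0.le)
        have := norm_sub_le x y
        linarith
      calc m * ENNReal.ofReal (δ ^ q / (2 * ‖x‖) ^ e)
          ≤ volume C * ENNReal.ofReal (δ ^ q / (2 * ‖x‖) ^ e) := mul_le_mul_left hCv _
        _ = ∫⁻ _ in C, ENNReal.ofReal (δ ^ q / (2 * ‖x‖) ^ e) := by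
            rw [setLIntegral_const, mul_comm]
        _ ≤ ∫⁻ y in C, ENNReal.ofReal (|u x - u y| ^ q / ‖x - y‖ ^ e) :=
            setLIntegral_mono' hCm h1
        _ ≤ ∫⁻ y, ENNReal.ofReal (|u x - u y| ^ q / ‖x - y‖ ^ e) :=
            setLIntegral_le_lintegral _ _
    rcases le_total (u x) ((a + b) / 2) with hc | hc
    · refine main SB hSBm Set.inter_subset_right (min_le_right _ _) ?_
      intro y hy
      have hby : b ≤ u y := hy.1
      have h2 : δ ≤ u y - u x := by rw [hδdef]; linarith
      calc δ ≤ u y - u x := h2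
        _ ≤ |u y - u x| := le_abs_self _
        _ = |u x - u y| := abs_sub_comm _ _
    · refine main SA hSAm Set.inter_subset_right (min_le_left _ _) ?_
      intro y hy
      have hay : u y ≤ a := hy.1
      have h2 : δ ≤ u x - u y := by rw [hδdef]; linarith
      calc δ ≤ u x - u y := h2
        _ ≤ |u x - u y| := le_abs_self _
  set S : Set (EuclideanSpace ℝ (Fin n)) := {x | R ≤ ‖x‖} with hSdef
  have hSm : MeasurableSet S := measurableSet_le measurable_const measurable_norm
  have step1 : ∫⁻ x in S, (m * ENNReal.ofReal (δ ^ q / (2 * ‖x‖) ^ e)) ^ (p / q) ≤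
      fracEnergy n s p q u := by
    unfold fracEnergy
    refine le_trans (setLIntegral_mono' hSm ?_)
      (setLIntegral_le_lintegral _ _)
    intro x hx
    exact ENNReal.rpow_le_rpow (claim1 x hx) (by positivity)
  set c0 : ℝ≥0∞ := m ^ (p / q) * ENNReal.ofReal (δ ^ p) * ENNReal.ofReal ((2:ℝ) ^ (-α))
    with hc0def
  have hc0ne : c0 ≠ 0 := by
    rw [hc0def]
    refine mul_ne_zero (mul_ne_zero ?_ ?_) ?_
    · exact (ENNReal.rpow_pos hm0 hmtop).ne'
    · simpa using Real.rpow_pos_of_pos hδ p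
    · simpa using Real.rpow_pos_of_pos two_pos (-α)
  have hc0top : c0 ≠ ⊤ := by
    rw [hc0def]
    exact ENNReal.mul_ne_top
      (ENNReal.mul_ne_top (ENNReal.rpow_ne_top_of_nonneg (by positivity) hmtop)
        ENNReal.ofReal_ne_top) ENNReal.ofReal_ne_top
  have hx_eq : ∀ x ∈ S, (m * ENNReal.ofReal (δ ^ q / (2 * ‖x‖) ^ e)) ^ (p / q) =
      c0 * ENNReal.ofReal (‖x‖ ^ (-α)) := by
    intro x hx
    have hx0 : (0:ℝ) < ‖x‖ := lt_of_lt_of_le hR0 hx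
    have h2t : (0:ℝ) < 2 * ‖x‖ := by positivity
    have hreal : (δ ^ q / (2 * ‖x‖) ^ e) ^ (p / q) =
        δ ^ p * ((2:ℝ) ^ (-α) * ‖x‖ ^ (-α)) := by
      rw [Real.div_rpow (by positivity) (by positivity)]
      rw [← Real.rpow_mul hδ.le, ← Real.rpow_mul h2t.le]
      have hqp : q * (p / q) = p := by field_simp
      rw [hqp, ← hαdef, div_eq_mul_inv, ← Real.rpow_neg h2t.le]
      rw [Real.mul_rpow (by norm_num) hx0.le]
    rw [ENNReal.mul_rpow_of_nonneg _ _ (by positivity : (0:ℝ) ≤ p / q)]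
    rw [ENNReal.ofReal_rpow_of_nonneg (by positivity) (by positivity)]
    rw [hreal, ENNReal.ofReal_mul (by positivity), ENNReal.ofReal_mul (by positivity)]
    rw [hc0def]
    ring
  have step2 : ∫⁻ x in S, (m * ENNReal.ofReal (δ ^ q / (2 * ‖x‖) ^ e)) ^ (p / q) = ⊤ := by
    rw [setLIntegral_congr_fun hSm hx_eq]
    rw [lintegral_const_mul' _ _ hc0top]
    rw [hSdef, lintegral_rpow_neg_norm_eq_top n hn1 α R hαn hα0.le hR1]
    exact ENNReal.mul_top hc0ne
  rw [step2] at step1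
  exact absurd (lt_of_le_of_lt step1 hfin) (lt_irrefl ⊤)


end
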